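/- For m ≥ 0 and the alternating iteration scheme, Q_m^L(q) = Σ_{j≥1} (−1)^{j−1} q^{j(3j−1)/2 + mj} · qbinom(2L−m, L + ⌊3j/2⌋). -/

import Mathlib

namespace Dyson

/-- The rank of a partition: largest part minus number of parts. -/
def rank {n : ℕ} (π : n.Partition) : ℤ :=
  (π.parts.sup : ℤ) - π.parts.card

/-- The Euler product `(q;q)_∞`. -/
noncomputable def euler (q : ℝ) : ℝ := ∏' j : ℕ, (1 - q ^ (j + 1))

/-- `Q_m(q)`: generating function for nonempty partitions of rank ≥ m. -/
noncomputable def Q (q : ℝ) (m : ℤ) : ℝ :=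
  ∑' n : ℕ, (Nat.card {π : (n + 1).Partition // m ≤ rank π} : ℝ) * q ^ (n + 1)

noncomputable def qPoch (q : ℝ) (n : ℕ) : ℝ := ∏ j ∈ Finset.range n, (1 - q ^ (j + 1))

noncomputable def qbinom (q : ℝ) (a b : ℤ) : ℝ :=
  if 0 ≤ b ∧ b ≤ a then qPoch q a.toNat / (qPoch q b.toNat * qPoch q (a - b).toNat) else 0

noncomputable def QL (q : ℝ) (m L : ℤ) : ℝ :=
  ∑' n : ℕ,
    (Nat.card {π : (n + 1).Partition // m ≤ rank π ∧ (π.parts.sup : ℤ) ≤ L} : ℝ) * q ^ (n + 1)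

def partAt {n : ℕ} (π : n.Partition) (j : ℕ) : ℕ :=
  ((π.parts.sort (· ≤ ·)).reverse.getD j 0)

def inRankSet {n : ℕ} (π : n.Partition) (k : ℤ) : Prop :=
  ∃ j : ℕ, (j : ℤ) - partAt π (j + 1) = k

noncomputable def G (q : ℝ) (k : ℤ) : ℝ :=
  ∑' n : ℕ, (Nat.card {π : n.Partition // inRankSet π k} : ℝ) * q ^ n

def crank {n : ℕ} (π : n.Partition) : ℤ :=
  if π.parts.count 1 = 0 then (π.parts.sup : ℤ)
  else ((π.parts.filter (fun p => π.parts.count 1 < p)).card : ℤ) - π.parts.count 1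

end Dyson

/-!
Sorting partitions by their largest part `i`: when the rank is at least `m`, deleting one part `i`
leaves a partition with at most `i - m - 1` parts, all at most `i`. Hence `Q_m^L - Q_m^(L-1)` is
`q^L` times the generating function of an `(L - m - 1) × L` box, the Gaussian binomial
`[2L - m - 1, L]`. The alternating sum obeys the same recursion, and both sides vanish at `L = m`.
For the alternating sum the step `L - 1 → L` is made in two half-steps through a companion sum
with top entry `2L - m - 1`; after applying the two `q`-Pascal rules, consecutive terms cancel in
pairs, except the first term of the second half-step, which is the increment.
-/

lemma Nat.card_subtype_or_of_disjoint {α : Type*} [Finite α] {p r : α → Prop}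
    (h : ∀ x, p x → ¬r x) :
    Nat.card {x // p x ∨ r x} = Nat.card {x // p x} + Nat.card {x // r x} := by
  classical
  rw [← Nat.card_sum]
  exact Nat.card_congr (subtypeOrEquiv p r fun _ hp hr x hx => h x (hp x hx) (hr x hx))

lemma Multiset.sup_le_succ_iff {s : Multiset ℕ} {l : ℕ} :
    s.sup ≤ l + 1 ↔ s.sup ≤ l ∨ l + 1 ∈ s ∧ s.sup ≤ l + 1 := by
  refine ⟨fun hs => or_iff_not_imp_right.2 fun hmem => ?_, ?_⟩
  · refine Multiset.sup_le.2 fun x hx => ?_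
    have : x ≠ l + 1 := fun h => hmem ⟨h ▸ hx, hs⟩
    have := (Multiset.le_sup hx).trans hs
    omega
  · rintro (hs | ⟨-, hs⟩)
    exacts [hs.trans l.le_succ, hs]

namespace Nat.Partition

variable {n : ℕ}

lemma parts_ne_zero (π : (n + 1).Partition) : π.parts ≠ 0 := fun h => by
  simpa [h] using π.parts_sum

lemma le_card_mul_sup (π : n.Partition) : n ≤ π.parts.card * π.parts.sup := by
  simpa [π.parts_sum] using Multiset.sum_le_card_nsmul π.parts _ fun _ => Multiset.le_sup

def eraseLargestEquiv (l c : ℕ) (hl : 0 < l) (hln : l ≤ n) :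
    {π : n.Partition // π.parts.card ≤ c + 1 ∧ l ∈ π.parts ∧ π.parts.sup ≤ l} ≃
      {μ : (n - l).Partition // μ.parts.card ≤ c ∧ μ.parts.sup ≤ l} where
  toFun π :=
    ⟨⟨π.1.parts.erase l, fun hi => π.1.parts_pos (Multiset.mem_of_mem_erase hi), by
        have := congrArg Multiset.sum (Multiset.cons_erase π.2.2.1)
        rw [Multiset.sum_cons, π.1.parts_sum] at this
        omega⟩,
      by rw [Multiset.card_erase_of_mem π.2.2.1, Nat.pred_eq_sub_one]; omega,
      (Multiset.sup_mono (Multiset.subset_of_le (Multiset.erase_le l _))).trans π.2.2.2⟩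
  invFun μ :=
    ⟨⟨l ::ₘ μ.1.parts, by
        intro i hi
        rcases Multiset.mem_cons.1 hi with rfl | hi
        exacts [hl, μ.1.parts_pos hi], by rw [Multiset.sum_cons, μ.1.parts_sum]; omega⟩,
      by rw [Multiset.card_cons]; omega, Multiset.mem_cons_self _ _,
      by rw [Multiset.sup_cons]; exact sup_le le_rfl μ.2.2⟩
  left_inv π := Subtype.ext <| Nat.Partition.ext <| Multiset.cons_erase π.2.2.1
  right_inv μ := Subtype.ext <| Nat.Partition.ext <| Multiset.erase_cons_head _ _

lemma card_sup_le_succ (P : n.Partition → Prop) (l : ℕ) :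
    Nat.card {π : n.Partition // P π ∧ π.parts.sup ≤ l + 1} =
      Nat.card {π : n.Partition // P π ∧ π.parts.sup ≤ l} +
        Nat.card {π : n.Partition // P π ∧ l + 1 ∈ π.parts ∧ π.parts.sup ≤ l + 1} := by
  rw [← Nat.card_subtype_or_of_disjoint]
  · exact Nat.card_congr <| Equiv.subtypeEquivRight fun π =>
      (and_congr_right' Multiset.sup_le_succ_iff).trans and_or_left
  refine fun π ⟨_, hs⟩ ⟨_, hmem, _⟩ => ?_
  have := Multiset.le_sup hmem
  omega

end Nat.Partition

section Shift

variable {M : Type*} [AddCommMonoid M] [TopologicalSpace M]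

lemma summable_of_forall_lt_eq_zero {f : ℕ → M} (N : ℕ) (hf : ∀ n, N < n → f n = 0) :
    Summable f :=
  summable_of_ne_finset_zero (s := Finset.range (N + 1)) fun n hn =>
    hf n (by simpa [Nat.lt_succ_iff] using hn)

lemma tsum_nat_add_of_forall_lt_eq_zero (f : ℕ → M) (k : ℕ) (hf : ∀ n < k, f n = 0) :
    ∑' n, f (n + k) = ∑' n, f n :=
  (add_left_injective k).tsum_eq fun n hn =>
    ⟨n - k, Nat.sub_add_cancel (not_lt.1 fun h => hn (hf n h))⟩

end Shift

lemma Finset.sum_range_two_mul {M : Type*} [AddCommMonoid M] (f : ℕ → M) (K : ℕ) :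
    ∑ j ∈ Finset.range (2 * K), f j =
      ∑ r ∈ Finset.range K, (f (2 * r) + f (2 * r + 1)) := by
  induction K with
  | zero => simp
  | succ K ih =>
    rw [Nat.mul_succ, Finset.sum_range_succ, Finset.sum_range_succ, Finset.sum_range_succ, ih,
      add_assoc]

lemma tsum_add_shift_mul_pow {c d : ℕ → ℕ} {q : ℝ} (k : ℕ)
    (hc : Summable fun n => (c n : ℝ) * q ^ n) (hd : Summable fun n => (d n : ℝ) * q ^ n) :
    ∑' n, ((c n + if k ≤ n then d (n - k) else 0 : ℕ) : ℝ) * q ^ n =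
      ∑' n, (c n : ℝ) * q ^ n + q ^ k * ∑' n, (d n : ℝ) * q ^ n := by
  set e : ℕ → ℝ := fun n => ((if k ≤ n then d (n - k) else 0 : ℕ) : ℝ) * q ^ n
  have he : ∀ n, e (n + k) = q ^ k * ((d n : ℝ) * q ^ n) := fun n => by
    simp only [e, Nat.le_add_left, if_true, Nat.add_sub_cancel, pow_add]
    ring
  have he0 : ∀ n < k, e n = 0 := fun n hn => by simp [e, Nat.not_le.2 hn]
  have he_summable : Summable e :=
    (summable_nat_add_iff k).1 (by simpa only [he] using hd.mul_left (q ^ k))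
  calc ∑' n, ((c n + if k ≤ n then d (n - k) else 0 : ℕ) : ℝ) * q ^ n
      = ∑' n, ((c n : ℝ) * q ^ n + e n) := tsum_congr fun n => by push_cast [e]; ring
    _ = ∑' n, (c n : ℝ) * q ^ n + ∑' n, e (n + k) := by
      rw [hc.tsum_add he_summable, tsum_nat_add_of_forall_lt_eq_zero e k he0]
    _ = ∑' n, (c n : ℝ) * q ^ n + q ^ k * ∑' n, (d n : ℝ) * q ^ n := by
      rw [tsum_congr he, tsum_mul_left]

namespace Dyson

open Finset

lemma one_sub_pow_succ_ne_zero {q : ℝ} (hq : |q| < 1) (j : ℕ) : 1 - q ^ (j + 1) ≠ 0 := by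
  refine sub_ne_zero.2 fun h => ?_
  have := pow_lt_one₀ (abs_nonneg q) hq j.succ_ne_zero
  rw [← abs_pow, ← h, abs_one] at this
  exact lt_irrefl _ this

lemma qPoch_ne_zero {q : ℝ} (hq : |q| < 1) (n : ℕ) : qPoch q n ≠ 0 :=
  prod_ne_zero_iff.2 fun j _ => one_sub_pow_succ_ne_zero hq j

lemma qPoch_zero (q : ℝ) : qPoch q 0 = 1 :=
  prod_range_zero _

lemma qPoch_succ (q : ℝ) (n : ℕ) : qPoch q (n + 1) = qPoch q n * (1 - q ^ (n + 1)) :=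
  prod_range_succ _ n

noncomputable def gaussBinom (q : ℝ) (n k : ℕ) : ℝ :=
  if k ≤ n then qPoch q n / (qPoch q k * qPoch q (n - k)) else 0

lemma qbinom_natCast (q : ℝ) (a b : ℕ) : qbinom q a b = gaussBinom q a b := by
  unfold qbinom gaussBinom
  by_cases h : b ≤ a
  · rw [if_pos ⟨b.cast_nonneg, by exact_mod_cast h⟩, if_pos h, Int.toNat_natCast,
      Int.toNat_natCast, ← Nat.cast_sub h, Int.toNat_natCast]
  · rw [if_neg fun h' => h (by exact_mod_cast h'.2), if_neg h]

lemma qbinom_of_lt (q : ℝ) {a b : ℤ} (h : a < b) : qbinom q a b = 0 :=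
  if_neg fun h' => (h.trans_le h'.2).false

section GaussBinom

variable {q : ℝ}

lemma gaussBinom_of_lt {n k : ℕ} (h : n < k) : gaussBinom q n k = 0 :=
  if_neg h.not_ge

lemma gaussBinom_of_le {n k : ℕ} (h : k ≤ n) :
    gaussBinom q n k = qPoch q n / (qPoch q k * qPoch q (n - k)) :=
  if_pos h

variable (hq : |q| < 1)
include hq

lemma gaussBinom_zero_right (n : ℕ) : gaussBinom q n 0 = 1 := by
  rw [gaussBinom_of_le n.zero_le, Nat.sub_zero, qPoch_zero, one_mul, div_self (qPoch_ne_zero hq n)]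

lemma gaussBinom_self (n : ℕ) : gaussBinom q n n = 1 := by
  rw [gaussBinom_of_le le_rfl, Nat.sub_self, qPoch_zero, mul_one, div_self (qPoch_ne_zero hq n)]

lemma gaussBinom_succ_succ (n b : ℕ) :
    gaussBinom q (n + 1) (b + 1) = gaussBinom q n b + q ^ (b + 1) * gaussBinom q n (b + 1) := by
  rcases lt_trichotomy n b with h | rfl | h
  · rw [gaussBinom_of_lt (by omega), gaussBinom_of_lt h, gaussBinom_of_lt (by omega)]; ring
  · rw [gaussBinom_self hq, gaussBinom_self hq, gaussBinom_of_lt n.lt_succ_self]; ring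
  · obtain ⟨r, rfl⟩ : ∃ r, n = b + 1 + r := ⟨n - (b + 1), by omega⟩
    rw [gaussBinom_of_le (by omega), gaussBinom_of_le (by omega), gaussBinom_of_le (by omega),
      show b + 1 + r + 1 - (b + 1) = r + 1 by omega, show b + 1 + r - b = r + 1 by omega,
      Nat.add_sub_cancel_left, qPoch_succ q (b + 1 + r), qPoch_succ q b, qPoch_succ q r]
    have := qPoch_ne_zero hq b
    have := qPoch_ne_zero hq r
    have := one_sub_pow_succ_ne_zero hq b
    have := one_sub_pow_succ_ne_zero hq r
    field_simp
    ring

lemma gaussBinom_succ_succ' (n b : ℕ) :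
    gaussBinom q (n + 1) (b + 1) = gaussBinom q n (b + 1) + q ^ (n - b) * gaussBinom q n b := by
  rcases lt_trichotomy n b with h | rfl | h
  · rw [gaussBinom_of_lt (by omega), gaussBinom_of_lt h, gaussBinom_of_lt (by omega)]; ring
  · rw [gaussBinom_self hq, gaussBinom_self hq, gaussBinom_of_lt n.lt_succ_self]; simp
  · obtain ⟨r, rfl⟩ : ∃ r, n = b + 1 + r := ⟨n - (b + 1), by omega⟩
    rw [gaussBinom_of_le (by omega), gaussBinom_of_le (by omega), gaussBinom_of_le (by omega),
      show b + 1 + r + 1 - (b + 1) = r + 1 by omega, show b + 1 + r - b = r + 1 by omega,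
      Nat.add_sub_cancel_left, qPoch_succ q (b + 1 + r), qPoch_succ q b, qPoch_succ q r]
    have := qPoch_ne_zero hq b
    have := qPoch_ne_zero hq r
    have := one_sub_pow_succ_ne_zero hq b
    have := one_sub_pow_succ_ne_zero hq r
    field_simp
    ring

end GaussBinom

noncomputable def boxCount (a b n : ℕ) : ℕ :=
  Nat.card {π : n.Partition // π.parts.card ≤ a ∧ π.parts.sup ≤ b}

noncomputable def rankCount (m l n : ℕ) : ℕ :=
  Nat.card {π : (n + 1).Partition // (m : ℤ) ≤ rank π ∧ π.parts.sup ≤ l}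

lemma card_largest_part (n c l : ℕ) (hl : 0 < l) :
    Nat.card {π : n.Partition // π.parts.card ≤ c + 1 ∧ l ∈ π.parts ∧ π.parts.sup ≤ l} =
      if l ≤ n then boxCount c l (n - l) else 0 := by
  split_ifs with hln
  · exact Nat.card_congr (Nat.Partition.eraseLargestEquiv l c hl hln)
  · refine Nat.card_eq_zero.2 <| .inl ⟨fun ⟨π, _, hmem, _⟩ => hln ?_⟩
    exact Nat.Partition.le_of_mem_parts hmem

lemma boxCount_zero (a b : ℕ) : boxCount a b 0 = 1 := by
  simp [boxCount]

lemma boxCount_eq_zero {a b n : ℕ} (h : a * b < n) : boxCount a b n = 0 :=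
  Nat.card_eq_zero.2 <| .inl ⟨fun ⟨π, hc, hs⟩ =>
    (π.le_card_mul_sup.trans (Nat.mul_le_mul hc hs)).not_gt h⟩

lemma boxCount_succ_succ (a b n : ℕ) :
    boxCount (a + 1) (b + 1) n =
      boxCount (a + 1) b n + if b + 1 ≤ n then boxCount a (b + 1) (n - (b + 1)) else 0 := by
  rw [boxCount, Nat.Partition.card_sup_le_succ, card_largest_part n a (b + 1) b.succ_pos]
  rfl

lemma rankCount_eq_zero {m l n : ℕ} (h : l * l < n + 1) : rankCount m l n = 0 :=
  Nat.card_eq_zero.2 <| .inl ⟨fun ⟨π, hr, hs⟩ => by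
    have hc : π.parts.card ≤ l := by unfold rank at hr; omega
    exact (π.le_card_mul_sup.trans (Nat.mul_le_mul hc hs)).not_gt h⟩

lemma rankCount_succ {m l : ℕ} (h : m ≤ l) (n : ℕ) :
    rankCount m (l + 1) n =
      rankCount m l n + if l ≤ n then boxCount (l - m) (l + 1) (n - l) else 0 := by
  have hlargest := card_largest_part (n + 1) (l - m) (l + 1) l.succ_pos
  simp only [Nat.add_le_add_iff_right, Nat.add_sub_add_right] at hlargest
  rw [rankCount, Nat.Partition.card_sup_le_succ, ← hlargest]
  refine congrArg _ (Nat.card_congr (Equiv.subtypeEquivRight fun π => and_congr_left fun hl => ?_))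
  rw [rank, le_antisymm hl.2 (Multiset.le_sup hl.1)]
  omega

noncomputable def boxGF (q : ℝ) (a b : ℕ) : ℝ := ∑' n, (boxCount a b n : ℝ) * q ^ n

lemma summable_boxCount (q : ℝ) (a b : ℕ) : Summable fun n => (boxCount a b n : ℝ) * q ^ n :=
  summable_of_forall_lt_eq_zero (a * b) fun n hn => by simp [boxCount_eq_zero hn]

lemma boxGF_of_mul_eq_zero (q : ℝ) {a b : ℕ} (h : a * b = 0) : boxGF q a b = 1 := by
  rw [boxGF, tsum_eq_single 0 fun n hn => by simp [boxCount_eq_zero (by omega : a * b < n)]]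
  simp [boxCount_zero]

lemma boxGF_succ_succ (q : ℝ) (a b : ℕ) :
    boxGF q (a + 1) (b + 1) = boxGF q (a + 1) b + q ^ (b + 1) * boxGF q a (b + 1) := by
  simp only [boxGF, boxCount_succ_succ]
  exact tsum_add_shift_mul_pow _ (summable_boxCount q _ _) (summable_boxCount q _ _)

lemma boxGF_eq_gaussBinom {q : ℝ} (hq : |q| < 1) (a b : ℕ) :
    boxGF q a b = gaussBinom q (a + b) b := by
  induction b generalizing a with
  | zero => rw [boxGF_of_mul_eq_zero q (mul_zero a), gaussBinom_zero_right hq]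
  | succ b ihb =>
    induction a with
    | zero => rw [boxGF_of_mul_eq_zero q (zero_mul _), zero_add, gaussBinom_self hq]
    | succ a iha =>
      rw [boxGF_succ_succ, ihb, iha, show a + 1 + (b + 1) = a + 1 + b + 1 by omega,
        gaussBinom_succ_succ hq, show a + (b + 1) = a + 1 + b by omega]

lemma summable_rankCount (q : ℝ) (m l : ℕ) :
    Summable fun n => (rankCount m l n : ℝ) * q ^ n :=
  summable_of_forall_lt_eq_zero (l * l) fun n hn => by
    simp [rankCount_eq_zero (by omega : l * l < n + 1)]

lemma QL_natCast (q : ℝ) (m l : ℕ) :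
    QL q m l = q * ∑' n, (rankCount m l n : ℝ) * q ^ n := by
  rw [← tsum_mul_left]
  refine tsum_congr fun n => ?_
  simp only [rankCount, Nat.cast_le, pow_succ]
  ring

lemma QL_eq_zero_of_le (q : ℝ) {m L : ℤ} (h : L ≤ m) : QL q m L = 0 := by
  have hempty (n : ℕ) :
      IsEmpty {π : (n + 1).Partition // m ≤ rank π ∧ (π.parts.sup : ℤ) ≤ L} :=
    ⟨fun ⟨π, hr, hs⟩ => by
      have := Multiset.card_pos.2 π.parts_ne_zero
      unfold rank at hr
      omega⟩
  simp [QL]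

lemma QL_succ {q : ℝ} (hq : |q| < 1) {m l : ℕ} (h : m ≤ l) :
    QL q m (l + 1 : ℕ) = QL q m l + q ^ (l + 1) * gaussBinom q (2 * (l + 1) - m - 1) (l + 1) := by
  simp only [QL_natCast, rankCount_succ h]
  rw [tsum_add_shift_mul_pow l (summable_rankCount q m l) (summable_boxCount q _ _),
    ← boxGF, boxGF_eq_gaussBinom hq, show l - m + (l + 1) = 2 * (l + 1) - m - 1 by omega]
  ring

def pentagonal (k : ℕ) : ℕ := k * (3 * k - 1) / 2

lemma pentagonal_succ (k : ℕ) : pentagonal (k + 1) = pentagonal k + 3 * k + 1 := by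
  have h : (k + 1) * (3 * (k + 1) - 1) = k * (3 * k - 1) + 2 * (3 * k + 1) := by
    rcases k with _ | k
    · rfl
    · rw [show 3 * (k + 1 + 1) - 1 = 3 * k + 5 by omega, show 3 * (k + 1) - 1 = 3 * k + 2 by omega]
      ring
  rw [pentagonal, pentagonal, h, Nat.add_mul_div_left _ _ two_pos]
  ring

/-- The `j`-th term of the alternating sum; the paper's summation index is `j + 1`. -/
noncomputable def altTerm (q : ℝ) (m l j : ℕ) : ℝ :=
  (-1) ^ j * q ^ (pentagonal (j + 1) + m * (j + 1)) *
    gaussBinom q (2 * l - m) (l + 3 * (j + 1) / 2)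

/-- The companion term through which the iteration passes from `l` to `l + 1`. -/
noncomputable def altTerm' (q : ℝ) (m l j : ℕ) : ℝ :=
  (-1) ^ j * q ^ (pentagonal (j + 1) + m * (j + 1)) *
    gaussBinom q (2 * l - m - 1) (l + (3 * (j + 1) - 1) / 2)

noncomputable def altSum (q : ℝ) (m l : ℕ) : ℝ := ∑' j, altTerm q m l j

noncomputable def altSum' (q : ℝ) (m l : ℕ) : ℝ := ∑' j, altTerm' q m l j

section Alternating

variable {q : ℝ} {m l : ℕ}

lemma altTerm_eq_zero {j : ℕ} (h : l ≤ m + j) : altTerm q m l j = 0 := by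
  rw [altTerm, gaussBinom_of_lt (by omega), mul_zero]

lemma altTerm'_eq_zero {j : ℕ} (h : l ≤ m + j) : altTerm' q m l j = 0 := by
  rw [altTerm', gaussBinom_of_lt (by omega), mul_zero]

lemma altSum_eq_sum (K : ℕ) (hK : l ≤ K) :
    altSum q m l = ∑ j ∈ range K, altTerm q m l j :=
  tsum_eq_sum fun j hj => altTerm_eq_zero (by simp at hj; omega)

lemma altSum'_eq_sum (K : ℕ) (hK : l ≤ K) :
    altSum' q m l = ∑ j ∈ range K, altTerm' q m l j :=
  tsum_eq_sum fun j hj => altTerm'_eq_zero (by simp at hj; omega)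

variable (hq : |q| < 1)
include hq

lemma pascal_pair {N b e e' : ℕ} (h : b + 1 ≤ N → e + (b + 1) = e' + (N - (b + 1))) :
    q ^ e * (gaussBinom q (N + 1) (b + 1) - gaussBinom q N b) =
      q ^ e' * (gaussBinom q (N + 1) (b + 1 + 1) - gaussBinom q N (b + 1 + 1)) := by
  rw [gaussBinom_succ_succ hq N b, gaussBinom_succ_succ' hq N (b + 1), add_sub_cancel_left,
    add_sub_cancel_left, ← mul_assoc, ← mul_assoc, ← pow_add, ← pow_add]
  by_cases hb : b + 1 ≤ N
  · rw [h hb]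
  · rw [gaussBinom_of_lt (by omega), mul_zero, mul_zero]

lemma altTerm_sub_altTerm'_zero (h : m < l) :
    altTerm q m l 0 - altTerm' q m l 0 = q ^ l * gaussBinom q (2 * l - m - 1) l := by
  have pascal := gaussBinom_succ_succ' hq (2 * l - m - 1) l
  rw [show 2 * l - m - 1 + 1 = 2 * l - m by omega] at pascal
  rw [altTerm, altTerm',
    show pentagonal (0 + 1) + m * (0 + 1) = m + 1 by simp [pentagonal, add_comm],
    show l + 3 * (0 + 1) / 2 = l + 1 by omega, show l + (3 * (0 + 1) - 1) / 2 = l + 1 by omega,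
    pascal, show 2 * l - m - 1 - l = l - (m + 1) by omega]
  linear_combination gaussBinom q (2 * l - m - 1) l * pow_mul_pow_sub q (show m + 1 ≤ l by omega)

lemma altTerm_sub_altTerm'_pair (h : m < l) (r : ℕ) :
    altTerm q m l (2 * r + 1) - altTerm' q m l (2 * r + 1) +
      (altTerm q m l (2 * r + 1 + 1) - altTerm' q m l (2 * r + 1 + 1)) = 0 := by
  have key := pascal_pair hq (N := 2 * l - m - 1) (b := l + 3 * r + 2)
    (e := pentagonal (2 * r + 1 + 1) + m * (2 * r + 1 + 1))
    (e' := pentagonal (2 * r + 1 + 1 + 1) + m * (2 * r + 1 + 1 + 1))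
    (fun _ => by rw [pentagonal_succ (2 * r + 1 + 1), Nat.mul_add_one m (2 * r + 1 + 1)]; omega)
  rw [show 2 * l - m - 1 + 1 = 2 * l - m by omega] at key
  rw [altTerm, altTerm', altTerm, altTerm', (odd_two_mul_add_one r).neg_one_pow,
    (show Even (2 * r + 1 + 1) from ⟨r + 1, by ring⟩).neg_one_pow,
    show l + 3 * (2 * r + 1 + 1) / 2 = l + 3 * r + 2 + 1 by omega,
    show l + (3 * (2 * r + 1 + 1) - 1) / 2 = l + 3 * r + 2 by omega,
    show l + 3 * (2 * r + 1 + 1 + 1) / 2 = l + 3 * r + 2 + 1 + 1 by omega,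
    show l + (3 * (2 * r + 1 + 1 + 1) - 1) / 2 = l + 3 * r + 2 + 1 + 1 by omega]
  linear_combination -key

lemma altTerm'_succ_sub_altTerm_pair (h : m ≤ l) (r : ℕ) :
    altTerm' q m (l + 1) (2 * r) - altTerm q m l (2 * r) +
      (altTerm' q m (l + 1) (2 * r + 1) - altTerm q m l (2 * r + 1)) = 0 := by
  have key := pascal_pair hq (N := 2 * l - m) (b := l + 3 * r + 1)
    (e := pentagonal (2 * r + 1) + m * (2 * r + 1))
    (e' := pentagonal (2 * r + 1 + 1) + m * (2 * r + 1 + 1))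
    (fun _ => by rw [pentagonal_succ (2 * r + 1), Nat.mul_add_one m (2 * r + 1)]; omega)
  rw [show 2 * l - m + 1 = 2 * (l + 1) - m - 1 by omega] at key
  rw [altTerm, altTerm', altTerm, altTerm', (even_two_mul r).neg_one_pow,
    (odd_two_mul_add_one r).neg_one_pow,
    show l + 1 + (3 * (2 * r + 1) - 1) / 2 = l + 3 * r + 1 + 1 by omega,
    show l + 3 * (2 * r + 1) / 2 = l + 3 * r + 1 by omega,
    show l + 1 + (3 * (2 * r + 1 + 1) - 1) / 2 = l + 3 * r + 1 + 1 + 1 by omega,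
    show l + 3 * (2 * r + 1 + 1) / 2 = l + 3 * r + 1 + 1 + 1 by omega]
  linear_combination key

lemma altSum_sub_altSum' (h : m < l) :
    altSum q m l - altSum' q m l = q ^ l * gaussBinom q (2 * l - m - 1) l := by
  rw [altSum_eq_sum (2 * l + 1) (by omega), altSum'_eq_sum (2 * l + 1) (by omega),
    ← sum_sub_distrib, sum_range_succ', Finset.sum_range_two_mul,
    sum_eq_zero fun r _ => altTerm_sub_altTerm'_pair hq h r, zero_add,
    altTerm_sub_altTerm'_zero hq h]

lemma altSum'_succ (h : m ≤ l) : altSum' q m (l + 1) = altSum q m l := by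
  rw [← sub_eq_zero, altSum'_eq_sum (2 * (l + 1)) (by omega),
    altSum_eq_sum (2 * (l + 1)) (by omega),
    ← sum_sub_distrib, Finset.sum_range_two_mul]
  exact sum_eq_zero fun r _ => altTerm'_succ_sub_altTerm_pair hq h r

lemma altSum_succ (h : m ≤ l) :
    altSum q m (l + 1) =
      altSum q m l + q ^ (l + 1) * gaussBinom q (2 * (l + 1) - m - 1) (l + 1) := by
  rw [← altSum'_succ hq h, ← altSum_sub_altSum' hq (by omega)]
  ring

end Alternating

lemma altSum_eq_zero_of_le {q : ℝ} {m l : ℕ} (h : l ≤ m) : altSum q m l = 0 :=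
  (tsum_congr fun _ => altTerm_eq_zero (by omega)).trans tsum_zero

lemma QL_eq_altSum {q : ℝ} (hq : |q| < 1) (m l : ℕ) : QL q m l = altSum q m l := by
  induction l with
  | zero => rw [QL_eq_zero_of_le q (by simp), altSum_eq_zero_of_le m.zero_le]
  | succ l ih =>
    rcases le_or_gt (l + 1) m with hl | hl
    · rw [QL_eq_zero_of_le q (by exact_mod_cast hl), altSum_eq_zero_of_le hl]
    · rw [QL_succ hq (by omega), altSum_succ hq (by omega), ih]

/-- for m ≥ 0,
`Q_m^L(q) = Σ_{j≥1} (-1)^{j-1} q^{j(3j-1)/2 + mj} qbinom(2L-m, L+⌊3j/2⌋)`. -/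
theorem stmt13 (q : ℝ) (hq : |q| < 1) (m : ℕ) (L : ℤ) :
    QL q m L = ∑' j : ℕ,
      (-1 : ℝ) ^ j * q ^ ((j + 1) * (3 * (j + 1) - 1) / 2 + m * (j + 1)) *
        qbinom q (2 * L - m) (L + (3 * (j + 1) : ℤ).fdiv 2) := by
  have hfdiv (j : ℕ) : (3 * (j + 1) : ℤ).fdiv 2 = ((3 * (j + 1) / 2 : ℕ) : ℤ) := by
    rw [Int.fdiv_eq_ediv_of_nonneg _ (by norm_num)]
    omega
  rcases le_or_gt L m with hL | hL
  · rw [QL_eq_zero_of_le q hL, eq_comm]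
    exact (tsum_congr fun j => by rw [hfdiv, qbinom_of_lt q (by omega), mul_zero]).trans tsum_zero
  · lift L to ℕ using by omega
    rw [QL_eq_altSum hq]
    refine tsum_congr fun j => ?_
    rw [hfdiv, show 2 * (L : ℤ) - m = ((2 * L - m : ℕ) : ℤ) by omega, ← Nat.cast_add,
      qbinom_natCast]
    rfl

end Dyson
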